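/- Let V⁽ⁱ⁾ ∈ ℝ^{nᵢ×ℓᵢ} have orthonormal columns and P⁽ⁱ⁾ = I_{nᵢ} − V⁽ⁱ⁾V⁽ⁱ⁾ᵀ for i = 1,…,d, and set P = P⁽ᵈ⁾ ⊗ ⋯ ⊗ P⁽¹⁾, A = A⁽ᵈ⁾ ⊗ ⋯ ⊗ A⁽¹⁾ with A⁽ⁱ⁾ ∈ ℝ^{pᵢ×nᵢ}. Then for every B = B⁽ᵈ⁾ ⊗ ⋯ ⊗ B⁽¹⁾ with B⁽ⁱ⁾ ∈ ℝ^{pᵢ×nᵢ} satisfying B⁽ⁱ⁾V⁽ⁱ⁾ = 0 for all i, one has ‖A − B‖_F ≥ ‖A − AP‖_F. -/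
import Mathlib


open Matrix

/-- `d`-fold Kronecker product of matrices, realized on product index types. -/
def kronD {d : ℕ} {p n : Fin d → ℕ}
    (A : ∀ i, Matrix (Fin (p i)) (Fin (n i)) ℝ) :
    Matrix (∀ i, Fin (p i)) (∀ i, Fin (n i)) ℝ :=
  Matrix.of fun r c => ∏ i, A i (r i) (c i)

/-- Frobenius norm. -/
noncomputable def frob {α β : Type*} [Fintype α] [Fintype β]
    (M : Matrix α β ℝ) : ℝ := Real.sqrt (Matrix.trace (Mᵀ * M))

lemma kronD_mul {d : ℕ} {p n m : Fin d → ℕ}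
    (A : ∀ i, Matrix (Fin (p i)) (Fin (n i)) ℝ)
    (B : ∀ i, Matrix (Fin (n i)) (Fin (m i)) ℝ) :
    kronD A * kronD B = kronD (fun i => A i * B i) := by
  ext r c
  simp only [kronD, Matrix.mul_apply, Matrix.of_apply]
  rw [Finset.prod_univ_sum]
  simp [Fintype.piFinset_univ, Finset.prod_mul_distrib]

lemma kronD_transpose {d : ℕ} {p n : Fin d → ℕ}
    (A : ∀ i, Matrix (Fin (p i)) (Fin (n i)) ℝ) :
    (kronD A)ᵀ = kronD (fun i => (A i)ᵀ) := by
  ext r c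
  rfl

lemma trace_transpose_mul_self_nonneg {α β : Type*} [Fintype α] [Fintype β]
    (Y : Matrix α β ℝ) : 0 ≤ Matrix.trace (Yᵀ * Y) := by
  simp only [Matrix.trace, Matrix.diag, Matrix.mul_apply, Matrix.transpose_apply]
  exact Finset.sum_nonneg fun j _ => Finset.sum_nonneg fun i _ => mul_self_nonneg _

lemma frob_pythag {α β : Type*} [Fintype α] [Fintype β]
    (X Y : Matrix α β ℝ) (h : Matrix.trace (Xᵀ * Y) = 0) :
    frob (X + Y) ≥ frob X := by
  have hYX : Matrix.trace (Yᵀ * X) = 0 := by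
    rw [← Matrix.trace_transpose (Yᵀ * X), Matrix.transpose_mul, Matrix.transpose_transpose, h]
  have hexp : Matrix.trace ((X + Y)ᵀ * (X + Y)) =
      Matrix.trace (Xᵀ * X) + Matrix.trace (Yᵀ * Y) := by
    simp [Matrix.transpose_add, Matrix.add_mul, Matrix.mul_add, Matrix.trace_add, h, hYX]
  unfold frob
  rw [hexp]
  exact Real.sqrt_le_sqrt (by linarith [trace_transpose_mul_self_nonneg Y])

/-- `A P` is a closest matrix to `A` among `d`-fold Kronecker products
`B = B⁽ᵈ⁾ ⊗ ⋯ ⊗ B⁽¹⁾` with `B⁽ⁱ⁾V⁽ⁱ⁾ = 0` for all `i`. -/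
theorem AP_closest_higher_dim {d : ℕ} {p n ℓ : Fin d → ℕ}
    (V : ∀ i, Matrix (Fin (n i)) (Fin (ℓ i)) ℝ)
    (hV : ∀ i, (V i)ᵀ * V i = 1)
    (A : ∀ i, Matrix (Fin (p i)) (Fin (n i)) ℝ) :
    ∀ B : ∀ i, Matrix (Fin (p i)) (Fin (n i)) ℝ,
      (∀ i, B i * V i = 0) →
      frob (kronD A - kronD B) ≥
        frob (kronD A - kronD A * kronD (fun i =>
          (1 : Matrix (Fin (n i)) (Fin (n i)) ℝ) - V i * (V i)ᵀ)) := by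
  intro B hB
  set P : ∀ i, Matrix (Fin (n i)) (Fin (n i)) ℝ :=
    fun i => (1 : Matrix (Fin (n i)) (Fin (n i)) ℝ) - V i * (V i)ᵀ with hPdef
  have hPsymm : ∀ i, (P i)ᵀ = P i := by
    intro i
    simp [hPdef, Matrix.transpose_sub, Matrix.transpose_mul, Matrix.transpose_one]
  have hPidem : ∀ i, P i * P i = P i := by
    intro i
    have key : V i * (V i)ᵀ * (V i * (V i)ᵀ) = V i * (V i)ᵀ := by
      rw [Matrix.mul_assoc, ← Matrix.mul_assoc (V i)ᵀ, hV i, Matrix.one_mul]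
    simp only [hPdef, Matrix.mul_sub, Matrix.sub_mul, Matrix.mul_one, Matrix.one_mul, key]
    abel
  have hBP : ∀ i, B i * P i = B i := by
    intro i
    rw [hPdef]
    rw [Matrix.mul_sub, Matrix.mul_one, ← Matrix.mul_assoc, hB i, Matrix.zero_mul, sub_zero]
  set kP := kronD P with hkP
  have hkPsymm : kPᵀ = kP := by
    rw [hkP, kronD_transpose]
    exact congrArg kronD (funext hPsymm)
  have hkPidem : kP * kP = kP := by
    rw [hkP, kronD_mul]
    exact congrArg kronD (funext hPidem)
  have hkBP : kronD B * kP = kronD B := by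
    rw [hkP, kronD_mul]
    exact congrArg kronD (funext hBP)
  set X := kronD A - kronD A * kP with hX
  set Y := kronD A * kP - kronD B with hY
  have hXkP : X * kP = 0 := by
    rw [hX, Matrix.sub_mul, Matrix.mul_assoc, hkPidem, sub_self]
  have hYkP : Y * kP = Y := by
    rw [hY, Matrix.sub_mul, Matrix.mul_assoc, hkPidem, hkBP]
  have hcross : Matrix.trace (Xᵀ * Y) = 0 := by
    have h1 : Xᵀ * Y = Xᵀ * (Y * kP) := by rw [hYkP]
    rw [h1, ← Matrix.mul_assoc, Matrix.trace_mul_cycle]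
    have h2 : kP * Xᵀ = 0 := by
      have : kP * Xᵀ = (X * kP)ᵀ := by rw [Matrix.transpose_mul, hkPsymm]
      rw [this, hXkP, Matrix.transpose_zero]
    rw [h2, Matrix.zero_mul, Matrix.trace_zero]
  have hsum : X + Y = kronD A - kronD B := by rw [hX, hY]; abel
  have := frob_pythag X Y hcross
  rw [hsum] at this
  exact this
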